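/- arXiv:1401.3073 — 5 statements merged into one kernel-verified Lean document; each statement's English description precedes it below -/
import Mathlib

section
/- Fix a nonnegative integer k. For l ≥ 0 and r > k + l, the double theta polynomials satisfy ϑ_r^{(l)}·ϑ_r^{(l)} + 2∑_{j=1}^r (-1)^j ϑ_{r+j}^{(l)}·ϑ_{r-j}^{(l)} = 0. For l ≥ 0 and r ≤ k + l, this quantity equals ∑_{s=0}^r e_s(z_1²,...,z_k²) e_{r-s}(t_1²,...,t_l²), where e_s denotes the elementary symmetric polynomial. -/
/-!
Statement 1: Fix `k ≥ 0`.  For `l ≥ 0` and `r > k + l` the double theta polynomials satisfy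
`ϑ_r^{(l)}·ϑ_r^{(l)} + 2∑_{j=1}^r (-1)^j ϑ_{r+j}^{(l)}·ϑ_{r-j}^{(l)} = 0`, while for
`r ≤ k + l` this quantity equals `∑_{s=0}^r e_s(z_1²,…,z_k²) e_{r-s}(t_1²,…,t_l²)`.

The double theta polynomial `_kϑ_r^{(l)}(x,z|t)` is the coefficient of `u^r` in
`∏_{i≥1} (1+x_i u)/(1-x_i u) · ∏_{i=1}^k (1+z_i u) · ∏_{i=1}^l (1-t_i u)` (with the last factor
replaced by `∏ (1+t_i u)⁻¹` for negative superscript), and `ϑ_r^{(l)} = 0` for `r < 0`.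
An identity of such symmetric functions holds iff it holds for every specialization, in every
commutative ring, of the `x`-variables in which only `x_1, …, x_N` are nonzero; we state the
identity universally over the ring, over `N`, and over the values of the variables
(`x i`, `z i`, `t i` standing for `x_{i+1}`, `z_{i+1}`, `t_{i+1}`). -/

open Finset

noncomputable section

variable {R : Type*} [CommRing R]

/-- The power series `(1 - a u)⁻¹ = ∑_n aⁿ uⁿ`. -/
def geomSeries (a : R) : PowerSeries R := PowerSeries.mk fun n => a ^ n

/-- The generating function `f_l(u)` of the double theta polynomials `_kϑ_r^{(l)}`,
with `N` of the `x`-variables. -/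
def thetaGF (k N : ℕ) (x z t : ℕ → R) (l : ℤ) : PowerSeries R :=
  (∏ i ∈ range N, ((1 + PowerSeries.C (x i) * PowerSeries.X) * geomSeries (x i))) *
    (∏ i ∈ range k, (1 + PowerSeries.C (z i) * PowerSeries.X)) *
    (if 0 ≤ l then ∏ i ∈ range l.toNat, (1 - PowerSeries.C (t i) * PowerSeries.X)
     else ∏ i ∈ range (-l).toNat, geomSeries (-(t i)))

/-- The double theta polynomial `_kϑ_r^{(l)}(x,z|t)`; it vanishes for `r < 0`. -/
def theta (k N : ℕ) (x z t : ℕ → R) (l r : ℤ) : R :=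
  if r < 0 then 0 else PowerSeries.coeff r.toNat (thetaGF k N x z t l)

/-- The elementary symmetric polynomial `e_s` evaluated at `f 0, …, f (m-1)`. -/
def esymVal (m s : ℕ) (f : ℕ → R) : R :=
  ∑ A ∈ (range m).powersetCard s, ∏ i ∈ A, f i

/-!
Write `f(u)` for the generating function of the `ϑ_r^{(l)}`. The left-hand side of the relation
is `(-1)^r` times the coefficient of `u^{2r}` in `f(u) f(-u)`, because the antidiagonal sum
`∑_{a+b=2r} (-1)^b ϑ_a ϑ_b` pairs `a = r + j` with `b = r - j`. In `f(u) f(-u)` the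
`x`-factors cancel, since `(1 + x u)/(1 - x u)` is inverted by `u ↦ -u`, and each of the
remaining factors `1 ± z u`, `1 ± t u` contributes `1 - z² u²`, resp. `1 - t² u²`. So
`f(u) f(-u) = E(-u²)` with `E(v) = ∏ (1 + z_i² v) ∏ (1 + t_i² v)`, whose coefficient of `v^r`
is the convolution of elementary symmetric values on the right, and vanishes for `r > k + l`.
-/

open PowerSeries

theorem geomSeries_mul_one_sub_C_mul_X (a : R) : geomSeries a * (1 - C a * X) = 1 := by
  have h := congrArg (rescale a) (mk_one_mul_one_sub_eq_one R)
  rw [map_mul, map_sub, map_one, rescale_X, rescale_mk] at h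
  simpa [geomSeries] using h

theorem coeff_evalNegHom (φ : R⟦X⟧) (n : ℕ) : coeff n (evalNegHom φ) = (-1) ^ n * coeff n φ :=
  coeff_rescale φ (-1) n

theorem evalNegHom_C (a : R) : evalNegHom (C a) = C a := by
  ext n
  rw [coeff_evalNegHom, coeff_C]
  split_ifs with h <;> simp [h]

theorem evalNegHom_one_add_C_mul_X (a : R) : evalNegHom (1 + C a * X) = 1 - C a * X := by
  rw [map_add, map_one, map_mul, evalNegHom_C, evalNegHom_X, mul_neg, sub_eq_add_neg]

theorem evalNegHom_one_sub_C_mul_X (a : R) : evalNegHom (1 - C a * X) = 1 + C a * X := by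
  rw [map_sub, map_one, map_mul, evalNegHom_C, evalNegHom_X, mul_neg, sub_neg_eq_add]

theorem coeff_prod_one_add_C_mul_X {ι : Type*} (s : Finset ι) (a : ι → R) (n : ℕ) :
    coeff n (∏ i ∈ s, (1 + C (a i) * X)) = ∑ A ∈ s.powersetCard n, ∏ i ∈ A, a i := by
  have hexp : ∏ i ∈ s, (1 + C (a i) * X) = ∑ A ∈ s.powerset, C (∏ i ∈ A, a i) * X ^ #A := by
    simp only [prod_one_add, mul_comm (C _) X, prod_mul_distrib, prod_const, map_prod, mul_comm]
  classical
  rw [hexp, map_sum, powersetCard_eq_filter, sum_filter]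
  simp only [coeff_C_mul_X_pow, eq_comm]

def mulEvalNeg : R⟦X⟧ →* R⟦X⟧ := MonoidHom.id _ * (evalNegHom : R⟦X⟧ →+* R⟦X⟧).toMonoidHom

theorem mulEvalNeg_apply (φ : R⟦X⟧) : mulEvalNeg φ = φ * evalNegHom φ := rfl

theorem mulEvalNeg_one_add_C_mul_X_mul_geomSeries (a : R) :
    mulEvalNeg ((1 + C a * X) * geomSeries a) = 1 := by
  have hneg := congrArg evalNegHom (geomSeries_mul_one_sub_C_mul_X a)
  rw [map_mul, map_one, evalNegHom_one_sub_C_mul_X] at hneg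
  rw [mulEvalNeg_apply, map_mul, evalNegHom_one_add_C_mul_X]
  linear_combination (evalNegHom (geomSeries a) * (1 + C a * X)) *
    geomSeries_mul_one_sub_C_mul_X a + hneg

theorem mulEvalNeg_one_add_C_mul_X (a : R) :
    mulEvalNeg (1 + C a * X) = expand 2 two_ne_zero (evalNegHom (1 + C (a ^ 2) * X)) := by
  rw [mulEvalNeg_apply, evalNegHom_one_add_C_mul_X, evalNegHom_one_add_C_mul_X, map_sub,
    map_one, map_mul, expand_C, expand_X, map_pow]
  ring

theorem mulEvalNeg_one_sub_C_mul_X (a : R) :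
    mulEvalNeg (1 - C a * X) = expand 2 two_ne_zero (evalNegHom (1 + C (a ^ 2) * X)) := by
  rw [← mulEvalNeg_one_add_C_mul_X, mulEvalNeg_apply, mulEvalNeg_apply,
    evalNegHom_one_add_C_mul_X, evalNegHom_one_sub_C_mul_X, mul_comm]

theorem sum_range_two_mul_add_one {M : Type*} [AddCommMonoid M] (g : ℕ → M) (r : ℕ) :
    ∑ b ∈ range (2 * r + 1), g b = g r + ∑ j ∈ Icc 1 r, (g (r - j) + g (r + j)) := by
  induction r generalizing g with
  | zero => simp
  | succ r ih =>
    rw [show 2 * (r + 1) + 1 = 2 * r + 1 + 1 + 1 by ring, sum_range_succ, sum_range_succ', ih,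
      sum_Icc_succ_top (by omega)]
    have hmid : ∑ j ∈ Icc 1 r, (g (r - j + 1) + g (r + j + 1)) =
        ∑ j ∈ Icc 1 r, (g (r + 1 - j) + g (r + 1 + j)) :=
      sum_congr rfl fun j hj => by
        rw [show r - j + 1 = r + 1 - j by grind, show r + j + 1 = r + 1 + j by ring]
    rw [hmid, Nat.sub_self, show 2 * r + 1 + 1 = r + 1 + (r + 1) by ring]
    abel

theorem neg_one_pow_sub_of_le {M : Type*} [Monoid M] [HasDistribNeg M] {j r : ℕ} (h : j ≤ r) :
    (-1 : M) ^ (r - j) = (-1) ^ r * (-1) ^ j := by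
  rw [← Nat.sub_add_cancel h, pow_add, Nat.add_sub_cancel, mul_assoc, ← pow_add,
    Even.neg_one_pow ⟨j, rfl⟩, mul_one]

theorem coeff_two_mul_mulEvalNeg (φ : R⟦X⟧) (r : ℕ) :
    coeff (2 * r) (mulEvalNeg φ) = (-1) ^ r * (coeff r φ * coeff r φ
      + 2 * ∑ j ∈ Icc 1 r, (-1) ^ j * coeff (r + j) φ * coeff (r - j) φ) := by
  rw [mulEvalNeg_apply, coeff_mul, Nat.sum_antidiagonal_eq_sum_range_succ_mk,
    sum_range_two_mul_add_one, mul_add, mul_sum, mul_sum]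
  simp only [coeff_evalNegHom]
  congr 1
  · rw [show 2 * r - r = r by omega]
    ring
  · refine sum_congr rfl fun j hj => ?_
    have hjr := (mem_Icc.1 hj).2
    rw [show 2 * r - (r - j) = r + j by omega, show 2 * r - (r + j) = r - j by omega,
      pow_add, neg_one_pow_sub_of_le hjr]
    ring

theorem esymVal_eq_zero_of_lt {m s : ℕ} (h : m < s) (f : ℕ → R) : esymVal m s f = 0 := by
  rw [esymVal, powersetCard_eq_empty.2 (by simpa using h), sum_empty]

theorem theta_natCast (k N : ℕ) (x z t : ℕ → R) (l : ℤ) (n : ℕ) :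
    theta k N x z t l n = coeff n (thetaGF k N x z t l) := by
  rw [theta, if_neg (Int.natCast_nonneg n).not_gt, Int.toNat_natCast]

theorem mulEvalNeg_thetaGF (k N : ℕ) (x z t : ℕ → R) (l : ℕ) :
    mulEvalNeg (thetaGF k N x z t l) = expand 2 two_ne_zero (evalNegHom
      ((∏ i ∈ range k, (1 + C (z i ^ 2) * X)) * ∏ i ∈ range l, (1 + C (t i ^ 2) * X))) := by
  rw [thetaGF, if_pos (Int.natCast_nonneg l), Int.toNat_natCast, map_mul, map_mul]
  simp only [map_prod, mulEvalNeg_one_add_C_mul_X_mul_geomSeries, prod_const_one, one_mul]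
  simp only [map_mul, map_prod, mulEvalNeg_one_add_C_mul_X, mulEvalNeg_one_sub_C_mul_X]

theorem coeff_two_mul_mulEvalNeg_thetaGF (k N : ℕ) (x z t : ℕ → R) (l r : ℕ) :
    coeff (2 * r) (mulEvalNeg (thetaGF k N x z t l)) = (-1) ^ r * ∑ s ∈ range (r + 1),
      esymVal k s (fun i => z i ^ 2) * esymVal l (r - s) (fun i => t i ^ 2) := by
  rw [mulEvalNeg_thetaGF, coeff_expand_mul, coeff_evalNegHom, coeff_mul,
    Nat.sum_antidiagonal_eq_sum_range_succ_mk]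
  simp only [coeff_prod_one_add_C_mul_X]
  rfl

/-- Lemma 5.2 of Ikeda–Matsumura: the square relation for the double theta polynomials. -/
theorem theta_square_relation (k N : ℕ) (x z t : ℕ → R) (l r : ℕ) :
    theta k N x z t l r * theta k N x z t l r
        + 2 * ∑ j ∈ Icc 1 r, (-1 : R) ^ j *
            theta k N x z t l ((r : ℤ) + j) * theta k N x z t l ((r : ℤ) - j)
      = if r ≤ k + l then
          ∑ s ∈ range (r + 1),
            esymVal k s (fun i => z i ^ 2) * esymVal l (r - s) (fun i => t i ^ 2)
        else 0 := by
  have hsum : ∑ j ∈ Icc 1 r, (-1 : R) ^ j *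
      theta k N x z t l ((r : ℤ) + j) * theta k N x z t l ((r : ℤ) - j) =
      ∑ j ∈ Icc 1 r, (-1 : R) ^ j *
        coeff (r + j) (thetaGF k N x z t l) * coeff (r - j) (thetaGF k N x z t l) :=
    sum_congr rfl fun j hj => by
      rw [← Nat.cast_add, ← Nat.cast_sub (mem_Icc.1 hj).2, theta_natCast, theta_natCast]
  have hcoeff := (coeff_two_mul_mulEvalNeg (thetaGF k N x z t l) r).symm.trans
    (coeff_two_mul_mulEvalNeg_thetaGF k N x z t l r)
  rw [theta_natCast, hsum, ((isUnit_neg_one (α := R)).pow r).mul_left_cancel hcoeff]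
  split_ifs with h
  · rfl
  · refine sum_eq_zero fun s _ => ?_
    rcases le_or_gt s k with hsk | hsk
    · rw [esymVal_eq_zero_of_lt (m := l) (by omega), mul_zero]
    · rw [esymVal_eq_zero_of_lt hsk, zero_mul]

end
end

section
/- Fix k ≥ 0. The double theta polynomial _kϑ_r^{(l)}(x,z|t) is invariant under the right action of s_i^z for all i ≥ 0 with i ≠ k; in particular, _kϑ_r^{(l)}(x,z|t) lies in the invariant subring R_∞^{(k)} of R_∞ under the right action of the parabolic subgroup W_(k) generated by {s_i : i ≥ 0, i ≠ k}. -/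
/-!
Statement 6: Fix `k ≥ 0`.  The double theta polynomial `_kϑ_r^{(l)}(x,z|t)` is invariant under
the right action of `s_i^z` for all `i ≥ 0` with `i ≠ k`; in particular it lies in the
invariant subring `R_∞^{(k)}` of `R_∞` under the right action of the parabolic subgroup
`W_(k)` generated by `{s_i : i ≥ 0, i ≠ k}`.

The right action: `s_i^z` for `i ≥ 1` swaps `z_i` and `z_{i+1}` and fixes `Q_r(x)`; `s_0^z`
sends `z_1 ↦ −z_1` and `Q_r(x_1,x_2,…) ↦ Q_r(z_1,x_1,x_2,…)` (i.e. it prepends `z_1` to the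
`x`-variables and negates `z_1`).  We realize the theta polynomials by their generating
functions, universally over every commutative ring, every number `N` of (possibly nonzero)
`x`-variables and all values of the variables (0-indexed: `x i, z i, t i` stand for
`x_{i+1}, z_{i+1}, t_{i+1}`).  Invariance under every generator `s_i^z`, `i ≠ k`, of `W_(k)`
is exactly membership in the invariant subring. -/

open Finset

noncomputable section

variable {R : Type*} [CommRing R]

/-- The image `s_i^z(ϑ_r^{(l)})` of a double theta polynomial under the right Weyl group
action: for `i ≥ 1` the variables `z_i` and `z_{i+1}` (0-indexed: `z (i-1)` and `z i`) are
swapped; for `i = 0`, `z_1 ↦ -z_1` and `Q_r(x) ↦ Q_r(z_1, x)`, i.e. `z_1` is prepended to the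
`x`-variables. -/
def thetaSZ (i k N : ℕ) (x z t : ℕ → R) (l r : ℤ) : R :=
  if i = 0 then
    theta k (N + 1) (fun j => if j = 0 then z 0 else x (j - 1))
      (Function.update z 0 (-(z 0))) t l r
  else
    theta k N x (z ∘ Equiv.swap (i - 1) i) t l r

lemma geomSeries_mul_one_sub (a : R) :
    geomSeries a * (1 - PowerSeries.C a * PowerSeries.X) = 1 := by
  ext n
  cases n with
  | zero => simp [geomSeries]
  | succ n =>
    rw [mul_one_sub, map_sub, ← mul_assoc, PowerSeries.coeff_succ_mul_X,
      PowerSeries.coeff_mul_C]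
    simp [geomSeries, pow_succ]

lemma prod_range_comp_swap {M : Type*} [CommMonoid M] (f : ℕ → M) {i k : ℕ} (h : i + 1 ≠ k) :
    ∏ j ∈ range k, f (Equiv.swap i (i + 1) j) = ∏ j ∈ range k, f j := by
  rcases Nat.lt_or_gt_of_ne h with hik | hki
  · refine Equiv.Perm.prod_comp _ _ f fun j hj => ?_
    rcases Equiv.swap_apply_ne_self_iff.mp hj with ⟨-, rfl | rfl⟩ <;> simp <;> omega
  · refine prod_congr rfl fun j hj => ?_
    rw [mem_range] at hj
    rw [Equiv.swap_apply_of_ne_of_ne (by omega) (by omega)]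

lemma thetaGF_comp_swap (N : ℕ) (x z t : ℕ → R) (l : ℤ) {i k : ℕ} (h : i + 1 ≠ k) :
    thetaGF k N x (z ∘ Equiv.swap i (i + 1)) t l = thetaGF k N x z t l := by
  simp only [thetaGF, Function.comp_apply,
    prod_range_comp_swap (fun j => 1 + PowerSeries.C (z j) * PowerSeries.X) h]

/-- Moving `z₁` into the `x`-variables contributes `(1 + z₁u)/(1 - z₁u)`, and negating it
in the `z`-variables turns its factor `1 + z₁u` into `1 - z₁u`, which cancels the denominator. -/
lemma thetaGF_cons_neg (k N : ℕ) (x z t : ℕ → R) (l : ℤ) :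
    thetaGF (k + 1) (N + 1) (fun j => if j = 0 then z 0 else x (j - 1))
      (Function.update z 0 (-(z 0))) t l = thetaGF (k + 1) N x z t l := by
  simp only [thetaGF, prod_range_succ' _ N, prod_range_succ' _ k, Nat.succ_ne_zero,
    if_false, if_pos, Nat.add_sub_cancel, Function.update_of_ne (Nat.succ_ne_zero _),
    Function.update_self, map_neg]
  linear_combination
    (∏ j ∈ range N, (1 + PowerSeries.C (x j) * PowerSeries.X) * geomSeries (x j)) *
      (1 + PowerSeries.C (z 0) * PowerSeries.X) *
      (∏ j ∈ range k, (1 + PowerSeries.C (z (j + 1)) * PowerSeries.X)) *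
      (if 0 ≤ l then ∏ j ∈ range l.toNat, (1 - PowerSeries.C (t j) * PowerSeries.X)
        else ∏ j ∈ range (-l).toNat, geomSeries (-(t j))) *
      geomSeries_mul_one_sub (z 0)

/-- Proposition 5.1 of Ikeda–Matsumura: `_kϑ_r^{(l)} ∈ R_∞^{(k)}`, i.e. the double theta
polynomial is invariant under `s_i^z` for every `i ≠ k`. -/
theorem theta_sz_invariant (k N : ℕ) (x z t : ℕ → R) (l r : ℤ) :
    ∀ i : ℕ, i ≠ k → thetaSZ i k N x z t l r = theta k N x z t l r := by
  rintro (_ | i) hi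
  · obtain ⟨k, rfl⟩ := Nat.exists_eq_succ_of_ne_zero (Ne.symm hi)
    simp only [thetaSZ, if_pos, theta, thetaGF_cons_neg]
  · simp only [thetaSZ, Nat.succ_ne_zero, if_false, Nat.add_sub_cancel, theta,
      thetaGF_comp_swap N x z t l hi]

end
end

section
/- Let c^{(1)},...,c^{(m)} be m infinite sequences of commuting formal variables c_r^{(i)} (r ∈ ℤ). If the two-entry Pfaffian satisfies Pf[c_r^{(l)} c_r^{(l)}] = 0 (for a specific fixed pair of superscript positions with equal entries), then for any r_1,...,r_m, Pf[c_{r_1}^{(l_1)} ⋯ c_r^{(l)} c_r^{(l)} ⋯ c_{r_m}^{(l_m)}] = 0, where the multi Schur-Pfaffian is defined recursively: Pf[c_r^{(1)}] = c_r^{(1)}; Pf[c_{r_1}^{(1)} c_{r_2}^{(2)}] = c_{r_1}^{(1)}c_{r_2}^{(2)} + 2∑_{s=1}^{r_2}(−1)^s c_{r_1+s}^{(1)}c_{r_2−s}^{(2)}; for even m ≥ 4, Pf[c_{r_1}^{(1)}⋯c_{r_m}^{(m)}] = ∑_{s=2}^m (−1)^s Pf[c_{r_1}^{(1)}c_{r_s}^{(s)}]·Pf[c_{r_2}^{(2)}⋯ĉ_{r_s}^{(s)}⋯c_{r_m}^{(m)}];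 for odd m ≥ 3, Pf[c_{r_1}^{(1)}⋯c_{r_m}^{(m)}] = ∑_{s=1}^m (−1)^{s−1} c_{r_s}^{(s)}·Pf[c_{r_1}^{(1)}⋯ĉ_{r_s}^{(s)}⋯c_{r_m}^{(m)}]. -/
/-!
Statement 7 (Proposition 4.1(1) of Ikeda–Matsumura, after Kazarian): if the two-entry multi
Schur-Pfaffian of a repeated entry vanishes, `Pf[c_r^{(l)} c_r^{(l)}] = 0`, then every multi
Schur-Pfaffian containing this repeated pair of entries in adjacent positions vanishes:
`Pf[c_{r_1}^{(1)} ⋯ c_r^{(l)} c_r^{(l)} ⋯ c_{r_m}^{(m)}] = 0`.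

An entry of a multi Schur-Pfaffian is a pair consisting of an infinite sequence
`c^{(i)} = (c_s^{(i)})_{s ∈ ℤ}` of (commuting) quantities and a degree `r_i ∈ ℤ`; the Pfaffian
is the ℤ-linear combination of products determined by the recursion of Section 4 of the paper
(`Pf[c_r] = c_r`; `Pf[c_{r₁} c_{r₂}] = c_{r₁}c_{r₂} + 2∑_{s=1}^{r₂}(−1)^s c_{r₁+s}c_{r₂−s}`;
expansion along the first entry for even length `≥ 4` and along each entry for odd length
`≥ 3`).  Since the claim is an implication between polynomial identities, we state it for
arbitrary sequences of elements of an arbitrary commutative ring, which includes the generic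
(polynomial-ring) case. -/

open Finset

noncomputable section

variable {R : Type*} [CommRing R]

/-- The two-entry multi Schur-Pfaffian
`Pf[c_r d_s] = c_r d_s + 2 ∑_{j=1}^{s} (−1)^j c_{r+j} d_{s−j}` (the sum being empty if
`s < 0`). -/
def pf2 (c d : ℤ → R) (r s : ℤ) : R :=
  c r * d s + 2 * ∑ j ∈ range s.toNat, (-1 : R) ^ (j + 1) * c (r + (j + 1)) * d (s - (j + 1))

/-- Auxiliary fuel-based definition of the multi Schur-Pfaffian of a list of entries
(sequence, degree). -/
def pfAux : ℕ → List ((ℤ → R) × ℤ) → R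
  | _, [] => 1
  | _, [e] => e.1 e.2
  | _, [e, f] => pf2 e.1 f.1 e.2 f.2
  | 0, _ => 0
  | n + 1, e :: l =>
    if (l.length + 1) % 2 = 0 then
      -- even length: expand along the first entry
      ∑ j : Fin l.length,
        (-1 : R) ^ (j : ℕ) * pf2 e.1 (l.get j).1 e.2 (l.get j).2 * pfAux n (l.eraseIdx j)
    else
      -- odd length: expand removing one entry at a time
      ∑ j : Fin (l.length + 1),
        (-1 : R) ^ (j : ℕ) * ((e :: l).get j).1 ((e :: l).get j).2
          * pfAux n ((e :: l).eraseIdx j)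

/-- The multi Schur-Pfaffian `Pf[c_{r_1}^{(1)} ⋯ c_{r_m}^{(m)}]` of a list of `m` entries. -/
def pfaffian (L : List ((ℤ → R) × ℤ)) : R := pfAux L.length L

/-!
Induction on the length. A Pfaffian of odd length is expanded along every entry, one of even
length along its first entry. Every term that deletes an entry outside the adjacent pair
`(c, r), (c, r)` still contains the pair and vanishes by induction; the two terms deleting one of
the two equal entries leave the same list and carry the opposite signs `(-1)^t`, `(-1)^(t+1)`,
so they cancel. When the pair stands at the front of an even list, expanding twice gives
`Pf[e e L] = Pf[e e] · Pf[L]`: the remaining double sum runs over ordered pairs of distinct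
entries of `L` and is alternating under exchanging the two entries.
-/

namespace List

variable {α : Type*}

theorem getD_eraseIdx_of_lt (l : List α) (d : α) {i j : ℕ} (h : j < i) :
    (l.eraseIdx i).getD j d = l.getD j d := by
  simp only [getD_eq_getElem?_getD, getElem?_eraseIdx_of_lt h]

theorem getD_eraseIdx_of_ge (l : List α) (d : α) {i j : ℕ} (h : i ≤ j) :
    (l.eraseIdx i).getD j d = l.getD (j + 1) d := by
  simp only [getD_eq_getElem?_getD, getElem?_eraseIdx_of_ge h]

theorem eraseIdx_eraseIdx_of_lt (l : List α) {i j : ℕ} (h : i < j) :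
    (l.eraseIdx j).eraseIdx i = (l.eraseIdx i).eraseIdx (j - 1) := by
  ext n : 1
  simp only [getElem?_eraseIdx]
  split_ifs <;> first | rfl | omega

end List

section AlternatingSums

variable {α : Type*}

theorem sum_alternating_eraseIdx_append_pair_eq_zero (d a : α) (l₁ l₂ : List α) (f : α → R)
    (g : List α → R)
    (hg : ∀ l₁' l₂' : List α, l₁'.length + l₂'.length < l₁.length + l₂.length →
      g (l₁' ++ a :: a :: l₂') = 0) :
    ∑ j ∈ range (l₁ ++ a :: a :: l₂).length, (-1 : R) ^ j * f ((l₁ ++ a :: a :: l₂).getD j d) *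
      g ((l₁ ++ a :: a :: l₂).eraseIdx j) = 0 := by
  have before : ∀ j < l₁.length, g ((l₁ ++ a :: a :: l₂).eraseIdx j) = 0 := fun j hj => by
    rw [List.eraseIdx_append_of_lt_length hj]
    exact hg _ _ (by rw [List.length_eraseIdx_of_lt hj]; omega)
  have after : ∀ j < l₂.length, g ((l₁ ++ a :: a :: l₂).eraseIdx (l₁.length + (j + 2))) = 0 :=
    fun j hj => by
    rw [List.eraseIdx_append_of_length_le (by omega), Nat.add_sub_cancel_left]
    exact hg _ _ (by rw [List.length_eraseIdx_of_lt hj]; omega)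
  have pair : ∀ j < 2, (l₁ ++ a :: a :: l₂).getD (l₁.length + j) d = a ∧
      (l₁ ++ a :: a :: l₂).eraseIdx (l₁.length + j) = l₁ ++ a :: l₂ := by
    intro j hj
    rw [List.getD_append_right _ _ _ _ (by omega), List.eraseIdx_append_of_length_le (by omega),
      Nat.add_sub_cancel_left]
    interval_cases j <;> simp
  simp only [List.length_append, List.length_cons, sum_range_add, sum_range_succ', zero_add]
  rw [sum_eq_zero fun j hj => by rw [before j (mem_range.1 hj), mul_zero],
    sum_eq_zero fun j hj => by rw [add_assoc, after j (mem_range.1 hj), mul_zero]]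
  obtain ⟨get₀, erase₀⟩ := pair 0 (by norm_num)
  obtain ⟨get₁, erase₁⟩ := pair 1 (by norm_num)
  rw [get₀, erase₀, get₁, erase₁]
  ring

theorem sum_alternating_eraseIdx_mul_sum_alternating_eraseIdx_eq_zero (d : α) (l : List α)
    (f : α → R) (g : List α → R) :
    ∑ i ∈ range l.length, (-1 : R) ^ i * f (l.getD i d) *
      ∑ k ∈ range (l.length - 1), (-1 : R) ^ k * f ((l.eraseIdx i).getD k d) *
        g ((l.eraseIdx i).eraseIdx k) = 0 := by
  simp only [mul_sum, ← sum_product']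
  -- `(i, k)` and its image delete the same two entries of `l` in the opposite order; exactly one
  -- of the two indices shifts by one, which flips the sign.
  refine sum_involution (fun x _ => if x.2 < x.1 then (x.2, x.1 - 1) else (x.2 + 1, x.1))
    ?_ ?_ ?_ ?_
  · rintro ⟨i, k⟩ hik
    simp only [mem_product, mem_range] at hik
    dsimp only
    split_ifs with hki
    · rw [List.getD_eraseIdx_of_lt _ _ hki, List.getD_eraseIdx_of_ge _ _ (by omega : k ≤ i - 1),
        Nat.sub_add_cancel (by omega : 1 ≤ i), List.eraseIdx_eraseIdx_of_lt _ hki]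
      obtain ⟨i, rfl⟩ : ∃ i', i = i' + 1 := ⟨i - 1, by omega⟩
      simp only [Nat.add_sub_cancel]
      ring
    · rw [List.getD_eraseIdx_of_ge _ _ (by omega : i ≤ k), List.getD_eraseIdx_of_lt _ _
        (by omega : i < k + 1), List.eraseIdx_eraseIdx_of_lt _ (by omega : i < k + 1),
        Nat.add_sub_cancel]
      ring
  · rintro ⟨i, k⟩ _ _ h
    dsimp only at h
    split_ifs at h <;> simp only [Prod.mk.injEq] at h <;> omega
  · rintro ⟨i, k⟩ hik
    simp only [mem_product, mem_range] at hik ⊢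
    split_ifs <;> omega
  · rintro ⟨i, k⟩ _
    by_cases hki : k < i
    · simp only [hki, if_true, if_neg (show ¬ i - 1 < k by omega), Prod.mk.injEq, and_true]; omega
    · simp only [hki, if_false, if_pos (show i < k + 1 by omega), Prod.mk.injEq, true_and]; omega

end AlternatingSums

theorem pfAux_succ_cons_cons_cons (n : ℕ) (e f g : (ℤ → R) × ℤ) (l : List ((ℤ → R) × ℤ)) :
    pfAux (n + 1) (e :: f :: g :: l) =
      if (l.length + 3) % 2 = 0 then
        ∑ j : Fin (l.length + 2),
          (-1 : R) ^ (j : ℕ) * pf2 e.1 ((f :: g :: l).get j).1 e.2 ((f :: g :: l).get j).2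
            * pfAux n ((f :: g :: l).eraseIdx j)
      else
        ∑ j : Fin (l.length + 3),
          (-1 : R) ^ (j : ℕ) * ((e :: f :: g :: l).get j).1 ((e :: f :: g :: l).get j).2
            * pfAux n ((e :: f :: g :: l).eraseIdx j) :=
  rfl

theorem pfAux_eq_pfaffian (n : ℕ) (L : List ((ℤ → R) × ℤ)) (h : L.length ≤ n) :
    pfAux n L = pfaffian L := by
  induction n using Nat.strong_induction_on generalizing L with
  | _ n ih =>
  match n, L, h with
  | n, [], _ | n, [_], _ | n, [_, _], _ => cases n <;> rfl
  | 0, _ :: _ :: _ :: _, h => simp at h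
  | n + 1, e :: f :: g :: l, h =>
    simp only [List.length_cons] at h
    have fuel : ∀ m, l.length + 2 ≤ m → m ≤ n → ∀ X : List ((ℤ → R) × ℤ),
        X.length ≤ l.length + 2 → pfAux n X = pfAux m X := fun m hm hmn X hX => by
      rw [ih n (by omega) X (by omega), ih m (by omega) X (by omega)]
    rw [pfaffian, List.length_cons, pfAux_succ_cons_cons_cons, pfAux_succ_cons_cons_cons]
    congr 1 <;> refine sum_congr rfl fun j _ => ?_ <;> congr 1 <;>
      exact fuel _ (by simp) (by simp; omega) _ (by
        have := j.isLt; simp only [List.length_eraseIdx, List.length_cons]; split <;> omega)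

theorem pfaffian_cons_of_odd_length (e : (ℤ → R) × ℤ) (l : List ((ℤ → R) × ℤ))
    (hl : Odd l.length) :
    pfaffian (e :: l) = ∑ j ∈ range l.length,
      (-1 : R) ^ j * pf2 e.1 (l.getD j 0).1 e.2 (l.getD j 0).2 * pfaffian (l.eraseIdx j) := by
  match l, hl with
  | [f], _ =>
    change pf2 e.1 f.1 e.2 f.2 = _
    simp [pfaffian, pfAux]
  | f :: g :: l, hl =>
    change pfAux (l.length + 2 + 1) _ = _
    rw [pfAux_succ_cons_cons_cons, if_pos (by grind), ← Fin.sum_univ_eq_sum_range]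
    refine sum_congr rfl fun j _ => ?_
    rw [List.get_eq_getElem, List.getD_eq_getElem _ _ j.isLt, pfAux_eq_pfaffian]
    have := j.isLt
    simp only [List.length_eraseIdx, List.length_cons]
    split <;> omega

theorem pfaffian_of_odd_length (L : List ((ℤ → R) × ℤ)) (hL : Odd L.length) :
    pfaffian L = ∑ j ∈ range L.length,
      (-1 : R) ^ j * (L.getD j 0).1 (L.getD j 0).2 * pfaffian (L.eraseIdx j) := by
  match L, hL with
  | [e], _ =>
    change e.1 e.2 = _
    simp [pfaffian, pfAux]
  | [_, _], hL => exact absurd hL (by simp)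
  | e :: f :: g :: l, hL =>
    change pfAux (l.length + 2 + 1) _ = _
    rw [pfAux_succ_cons_cons_cons, if_neg (by grind), ← Fin.sum_univ_eq_sum_range]
    refine sum_congr rfl fun j _ => ?_
    rw [List.get_eq_getElem, List.getD_eq_getElem _ _ j.isLt, pfAux_eq_pfaffian]
    have := j.isLt
    simp only [List.length_eraseIdx, List.length_cons]
    split <;> omega

theorem pfaffian_cons_cons_self_of_even_length (e : (ℤ → R) × ℤ) (L : List ((ℤ → R) × ℤ))
    (hL : Even L.length) :
    pfaffian (e :: e :: L) = pf2 e.1 e.1 e.2 e.2 * pfaffian L := by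
  have expand : ∀ i ∈ range L.length, pfaffian (e :: L.eraseIdx i) =
      ∑ k ∈ range (L.length - 1), (-1 : R) ^ k * pf2 e.1 ((L.eraseIdx i).getD k 0).1 e.2
        ((L.eraseIdx i).getD k 0).2 * pfaffian ((L.eraseIdx i).eraseIdx k) := fun i hi => by
    have hlen := List.length_eraseIdx_of_lt (mem_range.1 hi)
    rw [pfaffian_cons_of_odd_length _ _ (by rw [hlen]; grind), hlen]
  have cancel := sum_alternating_eraseIdx_mul_sum_alternating_eraseIdx_eq_zero 0 L
    (fun x => pf2 e.1 x.1 e.2 x.2) pfaffian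
  rw [pfaffian_cons_of_odd_length _ _ (by simpa using hL.add_one), List.length_cons,
    sum_range_succ', sum_congr rfl fun i hi => by
      rw [List.getD_cons_succ, List.eraseIdx_cons_succ, expand i hi]]
  simp only [pow_succ, mul_neg_one, neg_mul, sum_neg_distrib, cancel, neg_zero, zero_add,
    List.getD_cons_zero, List.eraseIdx_cons_zero, pow_zero, one_mul]

/-- Proposition 4.1(1): if `Pf[c_r c_r] = 0` then any multi Schur-Pfaffian with the repeated
adjacent pair of entries `(c, r), (c, r)` vanishes. -/
theorem pfaffian_repeated_entry_eq_zero (c : ℤ → R) (r : ℤ)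
    (h : pfaffian [(c, r), (c, r)] = 0) :
    ∀ L₁ L₂ : List ((ℤ → R) × ℤ), pfaffian (L₁ ++ (c, r) :: (c, r) :: L₂) = 0 := by
  intro L₁ L₂
  induction hn : L₁.length + L₂.length using Nat.strong_induction_on generalizing L₁ L₂ with
  | _ n ih =>
  subst hn
  have shorter : ∀ L₁' L₂' : List ((ℤ → R) × ℤ), L₁'.length + L₂'.length < L₁.length + L₂.length →
      pfaffian (L₁' ++ (c, r) :: (c, r) :: L₂') = 0 := fun L₁' L₂' hlt => ih _ hlt L₁' L₂' rfl
  rcases Nat.even_or_odd (L₁.length + L₂.length) with heven | hodd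
  · rcases L₁ with _ | ⟨e, L₁⟩
    · rw [List.nil_append, pfaffian_cons_cons_self_of_even_length _ _ (by simpa using heven)]
      rw [show pf2 c c r r = 0 from h, zero_mul]
    · rw [List.cons_append, pfaffian_cons_of_odd_length _ _ (by grind)]
      exact sum_alternating_eraseIdx_append_pair_eq_zero 0 _ L₁ L₂ (fun x => pf2 e.1 x.1 e.2 x.2) _
        fun L₁' L₂' hlt => shorter L₁' L₂' (by simp only [List.length_cons]; omega)
  · rw [pfaffian_of_odd_length _ (by grind)]
    exact sum_alternating_eraseIdx_append_pair_eq_zero 0 _ L₁ L₂ (fun x => x.1 x.2) _ shorter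

end
end

section
/- The invariant subring R_∞^{(k)} = {f ∈ R_∞ : s_i^z(f) = f for all i ≥ 0, i ≠ k} decomposes as a free ℤ[t]-module with basis the type C double Schubert polynomials 𝔠_w indexed by the minimum-length coset representatives w ∈ W_∞^{(k)}: R_∞^{(k)} = ⊕_{w ∈ W_∞^{(k)}} ℤ[t]·𝔠_w. -/
/-!
`W_∞` is the Coxeter group of type `C_∞` on the generators `s_0, s_1, …`, and `ℤ[t]` is
`MvPolynomial ℕ ℤ`. The ring `R_∞` is an abstract `ℤ[t]`-algebra `A` carrying the automorphisms
`s_i^z`, the divided differences `∂_i` with `∂_i f = 0 ↔ s_i^z f = f` (from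
`∂_i f = (f − s_i^z f)/ω(α_i)`), and the basis `b w = 𝔠_w` on which `∂_i` acts as in the paper.
Being spanned by part of a basis, the span on the right-hand side is the direct sum
`⊕_{w ∈ W_∞^{(k)}} ℤ[t]·𝔠_w`.

A vector lies in the span of a set of basis vectors iff its support lies in that set, so spans of
subsets of a basis intersect as the subsets do. The divided difference `∂_i` sends the `𝔠_w` with
right descent `i` injectively to basis vectors `𝔠_{w s_i}` and kills the others, so its kernel,
which is the ring of `s_i^z`-invariants, is spanned by the `𝔠_w` with `ℓ(w s_i) > ℓ(w)`.
Intersecting over `i ≠ k` leaves exactly the `𝔠_w` with `w ∈ W_∞^{(k)}`.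
-/

open CoxeterSystem

/-- The type `C_∞` Coxeter matrix on `ℕ`. -/
def CinfMatrix : CoxeterMatrix ℕ where
  M := Matrix.of fun i j : ℕ =>
    if i = j then 1
    else if i + j = 1 then 4
    else if max i j = min i j + 1 then 3
    else 2
  diagonal := by
    intro i
    simp [Matrix.of_apply]
  isSymm := by
    ext i j
    simp only [Matrix.transpose_apply, Matrix.of_apply]
    split_ifs <;> omega
  off_diagonal := by
    intro i j hij
    simp only [Matrix.of_apply]
    split_ifs <;> omega

/-- The type `C_∞` Weyl group `W_∞`. -/
abbrev Winf : Type := CinfMatrix.Group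

def WinfSystem : CoxeterSystem CinfMatrix Winf := CinfMatrix.toCoxeterSystem

/-- The set `W_∞^{(k)}` of minimum-length coset representatives of `W_∞ / W_(k)`. -/
def grassmannianInf (k : ℕ) : Set Winf :=
  {w | ∀ j : ℕ, j ≠ k →
    WinfSystem.length w < WinfSystem.length (w * WinfSystem.simple j)}

open Submodule

namespace Module.Basis

variable {ι R M : Type*} [Semiring R] [AddCommMonoid M] [Module R M] (b : Basis ι R M)

theorem biInf_span_image {κ : Type*} (S : Set κ) (s : κ → Set ι) :
    ⨅ j ∈ S, span R (b '' s j) = span R (b '' ⋂ j ∈ S, s j) := by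
  ext m
  simp only [mem_iInf, b.mem_span_image, Set.subset_iInter_iff]

variable {κ N : Type*} [AddCommMonoid N] [Module R N] (c : Basis κ R N)
  {T : M →ₗ[R] N} {p : ι → Prop} {σ : ι → κ}

theorem repr_apply_map_of_apply_eq (hσ : Function.Injective σ)
    (hT : ∀ i, p i → T (b i) = c (σ i)) (hT' : ∀ i, ¬p i → T (b i) = 0)
    {i : ι} (hi : p i) (m : M) :
    c.repr (T m) (σ i) = b.repr m i := by
  suffices Finsupp.lapply (σ i) ∘ₗ c.repr.toLinearMap ∘ₗ T
      = Finsupp.lapply i ∘ₗ b.repr.toLinearMap from LinearMap.congr_fun this m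
  refine b.ext fun j ↦ ?_
  by_cases hj : p j
  · simp [hT j hj, Finsupp.single_apply_left hσ]
  · have hji : j ≠ i := fun h ↦ hj (h ▸ hi)
    simp [hT' j hj, hji]

theorem ker_eq_span_image_of_apply_eq (hσ : Function.Injective σ)
    (hT : ∀ i, p i → T (b i) = c (σ i)) (hT' : ∀ i, ¬p i → T (b i) = 0) :
    LinearMap.ker T = span R (b '' {i | ¬p i}) := by
  refine le_antisymm (fun m hm ↦ ?_) (span_le.2 ?_)
  · rw [b.mem_span_image]
    intro i hi
    by_contra hpi
    have hcoeff := b.repr_apply_map_of_apply_eq c hσ hT hT' (not_not.1 hpi) m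
    rw [LinearMap.mem_ker.1 hm, map_zero, Finsupp.zero_apply] at hcoeff
    exact Finsupp.mem_support_iff.1 hi hcoeff.symm
  · rintro _ ⟨i, hi, rfl⟩
    exact hT' i hi

end Module.Basis

namespace CoxeterSystem

variable {B W : Type*} [Group W] {M : CoxeterMatrix B} (cs : CoxeterSystem M W)

theorem not_isRightDescent_iff_length_lt {w : W} {i : B} :
    ¬cs.IsRightDescent w i ↔ cs.length w < cs.length (w * cs.simple i) := by
  rw [not_isRightDescent_iff]
  rcases cs.length_mul_simple w i with h | h <;> omega

variable {R A : Type*} [Semiring R] [AddCommMonoid A] [Module R A] (b : Module.Basis W R A)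

theorem ker_eq_span_image_not_isRightDescent {D : A →ₗ[R] A} {i : B}
    (hD : ∀ w, D (b w) =
      if cs.length (w * cs.simple i) < cs.length w then b (w * cs.simple i) else 0) :
    LinearMap.ker D = span R (b '' {w | ¬cs.IsRightDescent w i}) :=
  b.ker_eq_span_image_of_apply_eq b (mul_left_injective (cs.simple i))
    (fun w hw ↦ (hD w).trans (if_pos hw)) (fun w hw ↦ (hD w).trans (if_neg hw))

theorem iInf_ker_eq_span_image {D : B → A →ₗ[R] A} (S : Set B)
    (hD : ∀ w i, D i (b w) =
      if cs.length (w * cs.simple i) < cs.length w then b (w * cs.simple i) else 0) :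
    ⨅ i ∈ S, LinearMap.ker (D i)
      = span R (b '' {w | ∀ i ∈ S, cs.length w < cs.length (w * cs.simple i)}) := by
  simp only [cs.ker_eq_span_image_not_isRightDescent b (hD · _), b.biInf_span_image]
  congr
  ext w
  simp [cs.not_isRightDescent_iff_length_lt]

end CoxeterSystem

/-- `R_∞^{(k)} = ⊕_{w ∈ W_∞^{(k)}} ℤ[t]·𝔠_w`. -/
theorem invariant_subring_basis (k : ℕ)
    (A : Type*) [CommRing A] [Algebra (MvPolynomial ℕ ℤ) A]
    -- the right action of the generators `s_i^z` by `ℤ[t]`-algebra automorphisms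
    (sz : ℕ → (A ≃ₐ[MvPolynomial ℕ ℤ] A))
    -- the right divided difference operators, `ℤ[t]`-linear
    (par : ℕ → (A →ₗ[MvPolynomial ℕ ℤ] A))
    -- `∂_i f = 0` iff `s_i^z f = f`  (from `∂_i f = (f − s_i^z f)/ω(α_i)`)
    (hlink : ∀ (i : ℕ) (f : A), par i f = 0 ↔ sz i f = f)
    -- the double Schubert polynomials `𝔠_w`, a `ℤ[t]`-basis of `R_∞`
    (b : Module.Basis Winf (MvPolynomial ℕ ℤ) A)
    -- `∂_i 𝔠_w = 𝔠_{w s_i}` if `ℓ(w s_i) < ℓ(w)`, and `= 0` otherwise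
    (hpar : ∀ (w : Winf) (i : ℕ),
      par i (b w) =
        if WinfSystem.length (w * WinfSystem.simple i) < WinfSystem.length w then
          b (w * WinfSystem.simple i)
        else 0) :
    (⨅ i ∈ {i : ℕ | i ≠ k},
        LinearMap.eqLocus ((sz i).toLinearMap) (LinearMap.id : A →ₗ[MvPolynomial ℕ ℤ] A))
      = Submodule.span (MvPolynomial ℕ ℤ) (⇑b '' grassmannianInf k) := by
  have eqLocus_eq_ker : ∀ i,
      LinearMap.eqLocus (sz i).toLinearMap LinearMap.id = LinearMap.ker (par i) := fun i ↦ by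
    ext f
    simp [hlink]
  simp only [eqLocus_eq_ker]
  exact WinfSystem.iInf_ker_eq_span_image b _ hpar
end

section
/- Let λ be a k-strict partition with characteristic index χ = (χ_1,...,χ_{n-k}) (defined via the associated k-Grassmannian signed permutation w_λ^{(k)} = v_1⋯v_k | ζ̄_1⋯ζ̄_s u_1⋯u_{n-k-s} by χ_j = ζ_j − 1 for j ≤ s and χ_j = −u_{j−s} for j > s). Then for 1 ≤ i < j ≤ n−k: χ_i + χ_j ≥ 0 if and only if λ_i + λ_j > 2k + j − i. -/
/-!
Statement 12 (Lemma 3.3 of Ikeda–Matsumura): let `λ` be a `k`-strict partition with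
characteristic index `χ = (χ_1,…,χ_{n-k})`.  Then for `1 ≤ i < j ≤ n−k`:
`χ_i + χ_j ≥ 0` if and only if `λ_i + λ_j > 2k + j − i`.

Formalization.  We encode the `k`-Grassmannian signed permutation
`w_λ^{(k)} = v_1⋯v_k | ζ̄_1⋯ζ̄_s u_1⋯u_{n-k-s}` concretely as a function `w : ℕ → ℤ` whose
values at `0, …, n-1` are the one-line entries (`w̄ = -w`), with the shape conditions
`0 < v_1 < ⋯ < v_k`, `ζ̄_1 < ⋯ < ζ̄_s < 0 < u_1 < ⋯ < u_{n-k-s}` and the requirement that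
the absolute values of the entries are a permutation of `1, …, n`.  The partition `λ` and the
characteristic index `χ` are recovered from `w` by `λ_j = ζ_j + k` (for `j ≤ s`),
`λ_j = #{p ≤ k : v_p > u_{j-s}}` (for `j > s`), `χ_j = ζ_j − 1` (for `j ≤ s`) and
`χ_j = −u_{j-s}` (for `j > s`); this is the inverse of the bijection `λ ↦ w_λ^{(k)}` of
Buch–Kresch–Tamvakis used in the paper. -/

open Finset

/-- The one-line entries of a `k`-Grassmannian element of `W_n`: positions `0,…,k-1` carry the
increasing positive entries `v_1 < ⋯ < v_k`, positions `k,…,k+s-1` the increasing negative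
entries `ζ̄_1 < ⋯ < ζ̄_s`, positions `k+s,…,n-1` the increasing positive entries
`u_1 < ⋯ < u_{n-k-s}`; the absolute values of the entries form a permutation of `1,…,n`. -/
def GrassShape (n k s : ℕ) (w : ℕ → ℤ) : Prop :=
  k + s ≤ n ∧
  (∀ i, i < k → 0 < w i) ∧
  (∀ i, k ≤ i → i < k + s → w i < 0) ∧
  (∀ i, k + s ≤ i → i < n → 0 < w i) ∧
  (∀ i j, i < j → j < k → w i < w j) ∧
  (∀ i j, k ≤ i → i < j → j < k + s → w i < w j) ∧
  (∀ i j, k + s ≤ i → i < j → j < n → w i < w j) ∧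
  (∀ i j, i < n → j < n → (w i).natAbs = (w j).natAbs → i = j) ∧
  (∀ i, i < n → 1 ≤ (w i).natAbs ∧ (w i).natAbs ≤ n)

/-- The part `λ_j` (for `1 ≤ j ≤ n-k`) of the `k`-strict partition corresponding to the
`k`-Grassmannian element `w`: `λ_j = ζ_j + k` for `j ≤ s` and `λ_j = #{p : v_p > u_{j-s}}`
for `j > s`. -/
def lamOf (k s : ℕ) (w : ℕ → ℤ) (j : ℕ) : ℤ :=
  if j ≤ s then -(w (k + j - 1)) + k
  else (((range k).filter (fun p => w (k + j - 1) < w p)).card : ℤ)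

/-- The entry `χ_j` (for `1 ≤ j ≤ n-k`) of the characteristic index of `λ`:
`χ_j = ζ_j − 1` for `j ≤ s` and `χ_j = −u_{j-s}` for `j > s`. -/
def chiOf (k s : ℕ) (w : ℕ → ℤ) (j : ℕ) : ℤ :=
  if j ≤ s then -(w (k + j - 1)) - 1
  else -(w (k + j - 1))

/-
Only the case `i ≤ s < j` has content. The permutation property says that exactly `u = u_{j-s}`
entries have absolute value at most `u`, i.e. `u = (j - s) + #{v_p < u} + #{ζ_p < u}`; this turns
`λ_i + λ_j > 2k + j - i` into `ζ_i - u + #{ζ_p < u} > s - i`. As the `ζ_p` are distinct integers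
decreasing in `p`, a pigeonhole count of those lying strictly between `u` and `ζ_i` shows that this
holds exactly when `ζ_i > u`, i.e. when `χ_i + χ_j ≥ 0`. For `j ≤ s` both sides hold and for
`s < i` both fail, by size alone.
-/

lemma card_filter_Ico_add_card_filter_Ico {α : Type*} [LinearOrder α] [LocallyFiniteOrder α]
    (P : α → Prop) [DecidablePred P] {a b c : α} (hab : a ≤ b) (hbc : b ≤ c) :
    #{p ∈ Ico a b | P p} + #{p ∈ Ico b c | P p} = #{p ∈ Ico a c | P p} := by
  rw [← card_union_of_disjoint (disjoint_filter_filter (Ico_disjoint_Ico_consecutive a b c)),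
    ← filter_union, Ico_union_Ico_eq_Ico hab hbc]

lemma StrictMonoOn.apply_add_sub_le {f : ℕ → ℤ} {a b : ℕ} (hf : StrictMonoOn f (Set.Icc a b))
    (hab : a ≤ b) : f a + ((b : ℤ) - a) ≤ f b := by
  have hmaps : Set.MapsTo f (Icc a b) (Icc (f a) (f b)) := fun q hq => by
    rw [coe_Icc] at hq
    exact mem_Icc.2 ⟨hf.monotoneOn ⟨le_rfl, hab⟩ hq hq.1,
      hf.monotoneOn hq ⟨hab, le_rfl⟩ hq.2⟩
  have := card_le_card_of_injOn f hmaps (by simpa only [coe_Icc] using hf.injOn)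
  rw [Nat.card_Icc, Int.card_Icc] at this
  omega

lemma StrictMonoOn.lt_iff_sub_le_add_card {f : ℕ → ℤ} {a b i : ℕ} {v : ℤ}
    (hf : StrictMonoOn f (Set.Ico a b)) (hv : ∀ q ∈ Ico a b, f q ≠ v) (hi : i ∈ Ico a b) :
    f i < v ↔ (b : ℤ) - i ≤ v - f i + #{q ∈ Ico a b | v < f q} := by
  have hi' : i ∈ Set.Ico a b := mem_Ico.1 hi
  have hsplit : #{q ∈ Ico a i | v < f q} + #{q ∈ Ico i b | v < f q} =
      #{q ∈ Ico a b | v < f q} :=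
    card_filter_Ico_add_card_filter_Ico _ hi'.1 hi'.2.le
  rcases (hv i hi).lt_or_gt with hlt | hgt
  · have hleft : #{q ∈ Ico a i | v < f q} = 0 := by
      refine card_eq_zero.2 (filter_eq_empty_iff.2 fun q hq => ?_)
      have hq' := mem_Ico.1 hq
      exact not_lt.2 ((hf ⟨hq'.1, hq'.2.trans hi'.2⟩ hi' hq'.2).le.trans hlt.le)
    have hcompl := card_filter_add_card_filter_not (s := Ico i b) (fun q => v < f q)
    have hbelow : #{q ∈ Ico i b | ¬ v < f q} ≤ #(Ico (f i) v) := by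
      refine card_le_card_of_injOn f (fun q hq => ?_) (hf.injOn.mono fun q hq => ?_)
      · simp only [coe_filter, mem_Ico, Set.mem_ofPred_eq, not_lt] at hq
        have hq' : q ∈ Set.Ico a b := ⟨hi'.1.trans hq.1.1, hq.1.2⟩
        exact mem_Ico.2 ⟨hf.monotoneOn hi' hq' hq.1.1,
          lt_of_le_of_ne hq.2 (hv q (mem_Ico.2 hq'))⟩
      · simp only [coe_filter, mem_Ico, Set.mem_ofPred_eq] at hq
        exact ⟨hi'.1.trans hq.1.1, hq.1.2⟩
    rw [Int.card_Ico] at hbelow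
    rw [Nat.card_Ico] at hcompl
    simp only [hlt, true_iff]
    omega
  · have hright : #{q ∈ Ico i b | v < f q} = b - i := by
      rw [filter_true_of_mem fun q hq => ?_, Nat.card_Ico]
      have hq' := mem_Ico.1 hq
      exact hgt.trans_le (hf.monotoneOn hi' ⟨hi'.1.trans hq'.1, hq'.2⟩ hq'.1)
    have habove : #{q ∈ Ico a i | v < f q} ≤ #(Ioo v (f i)) := by
      refine card_le_card_of_injOn f (fun q hq => ?_) (hf.injOn.mono fun q hq => ?_)
      · simp only [coe_filter, mem_Ico, Set.mem_ofPred_eq] at hq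
        exact mem_Ioo.2 ⟨hq.2, hf ⟨hq.1.1, hq.1.2.trans hi'.2⟩ hi' hq.1.2⟩
      · simp only [coe_filter, mem_Ico, Set.mem_ofPred_eq] at hq
        exact ⟨hq.1.1, hq.1.2.trans hi'.2⟩
    rw [Int.card_Ioo] at habove
    simp only [not_lt.2 hgt.le, false_iff]
    have := hi'.2
    omega

namespace GrassShape

variable {n k s : ℕ} {w : ℕ → ℤ}

lemma apply_pos_of_lt (hw : GrassShape n k s w) {p : ℕ} (hp : p < k) : 0 < w p :=
  hw.2.1 p hp

lemma apply_neg (hw : GrassShape n k s w) {p : ℕ} (hp : p ∈ Set.Ico k (k + s)) : w p < 0 :=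
  hw.2.2.1 p hp.1 hp.2

lemma apply_pos_of_le (hw : GrassShape n k s w) {p : ℕ} (hp : p ∈ Set.Ico (k + s) n) :
    0 < w p :=
  hw.2.2.2.1 p hp.1 hp.2

lemma strictMonoOn_neg_block (hw : GrassShape n k s w) : StrictMonoOn w (Set.Ico k (k + s)) :=
  fun _ hp _ hq hpq => hw.2.2.2.2.2.1 _ _ hp.1 hpq hq.2

lemma strictMonoOn_pos_block (hw : GrassShape n k s w) : StrictMonoOn w (Set.Ico (k + s) n) :=
  fun _ hp _ hq hpq => hw.2.2.2.2.2.2.1 _ _ hp.1 hpq hq.2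

lemma injOn_natAbs (hw : GrassShape n k s w) : Set.InjOn (fun p => (w p).natAbs) (range n) :=
  fun p hp q hq => hw.2.2.2.2.2.2.2.1 p q (mem_range.1 hp) (mem_range.1 hq)

lemma mapsTo_natAbs (hw : GrassShape n k s w) :
    Set.MapsTo (fun p => (w p).natAbs) (range n) (Icc 1 n) :=
  fun p hp => mem_Icc.2 (hw.2.2.2.2.2.2.2.2 p (mem_range.1 hp))

lemma apply_ne_neg_apply (hw : GrassShape n k s w) {p q : ℕ} (hpq : p ≠ q) (hp : p < n)
    (hq : q < n) : w p ≠ -w q :=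
  fun h => hpq (hw.injOn_natAbs (mem_range.2 hp) (mem_range.2 hq) (by simp [h]))

lemma card_natAbs_le (hw : GrassShape n k s w) {N : ℕ} (hN : N ≤ n) :
    #{p ∈ range n | (w p).natAbs ≤ N} = N := by
  have hsurj := surjOn_of_injOn_of_card_le _ hw.mapsTo_natAbs hw.injOn_natAbs (by simp)
  calc #{p ∈ range n | (w p).natAbs ≤ N}
      = #(Icc 1 N) := by
        refine card_nbij (fun p => (w p).natAbs) (fun p hp => ?_)
          (hw.injOn_natAbs.mono (coe_subset.2 (filter_subset _ _))) (fun x hx => ?_)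
        · simp only [coe_filter, mem_range, Set.mem_ofPred_eq] at hp
          exact mem_Icc.2 ⟨(mem_Icc.1 (hw.mapsTo_natAbs (mem_range.2 hp.1))).1, hp.2⟩
        · have hx' := mem_Icc.1 hx
          obtain ⟨p, hp, hpx⟩ := hsurj (mem_Icc.2 ⟨hx'.1, hx'.2.trans hN⟩)
          exact ⟨p, by simpa [hpx] using ⟨mem_range.1 hp, hx'.2⟩, hpx⟩
    _ = N := by simp

lemma apply_add_card_gt (hw : GrassShape n k s w) {b : ℕ} (hb : b ∈ Set.Ico (k + s) n) :
    w b + #{p ∈ range k | w b < w p} =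
      k + (b + 1 - (k + s) : ℕ) + #{p ∈ Ico k (k + s) | -w b < w p} := by
  have hub := hw.apply_pos_of_le hb
  set N := (w b).natAbs
  have hNw : (N : ℤ) = w b := Int.natAbs_of_nonneg hub.le
  have htotal := hw.card_natAbs_le (N := N)
    (mem_Icc.1 (hw.mapsTo_natAbs (mem_range.2 hb.2))).2
  have hks : k ≤ k + s := Nat.le_add_right k s
  rw [range_eq_Ico, ← card_filter_Ico_add_card_filter_Ico _ (Nat.zero_le k) (hks.trans hw.1),
    ← card_filter_Ico_add_card_filter_Ico _ hks hw.1, ← range_eq_Ico] at htotal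
  have hleft : {p ∈ range k | w b < w p} = {p ∈ range k | ¬ (w p).natAbs ≤ N} := by
    refine filter_congr fun p hp => ?_
    have := hw.apply_pos_of_lt (mem_range.1 hp)
    omega
  have hcompl := card_filter_add_card_filter_not (s := range k) (fun p => (w p).natAbs ≤ N)
  have hmid : {p ∈ Ico k (k + s) | (w p).natAbs ≤ N} = {p ∈ Ico k (k + s) | -w b < w p} := by
    refine filter_congr fun p hp => ?_
    have hp' : p ∈ Set.Ico k (k + s) := mem_Ico.1 hp
    have hneg := hw.apply_neg hp'
    have hne := hw.apply_ne_neg_apply (hp'.2.trans_le hb.1).ne (hp'.2.trans_le hw.1) hb.2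
    omega
  have hright : {p ∈ Ico (k + s) n | (w p).natAbs ≤ N} = Icc (k + s) b := by
    ext p
    simp only [mem_filter, mem_Ico, mem_Icc]
    constructor
    · rintro ⟨hp, hpN⟩
      refine ⟨hp.1, (hw.strictMonoOn_pos_block.le_iff_le hp hb).1 ?_⟩
      have := hw.apply_pos_of_le hp
      omega
    · rintro ⟨hp1, hpb⟩
      have hp : p ∈ Set.Ico (k + s) n := ⟨hp1, hpb.trans_lt hb.2⟩
      refine ⟨hp, ?_⟩
      have := (hw.strictMonoOn_pos_block.le_iff_le hp hb).2 hpb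
      have := hw.apply_pos_of_le hp
      omega
  rw [hmid, hright, Nat.card_Icc] at htotal
  rw [card_range] at hcompl
  rw [hleft]
  omega

variable {i j : ℕ}

lemma chi_add_chi_nonneg_of_le (hw : GrassShape n k s w) (hi : 1 ≤ i) (hij : i < j)
    (hjs : j ≤ s) : 0 ≤ chiOf k s w i + chiOf k s w j := by
  simp only [chiOf, if_pos (hij.le.trans hjs), if_pos hjs]
  have := hw.apply_neg (p := k + i - 1) ⟨by omega, by omega⟩
  have := hw.apply_neg (p := k + j - 1) ⟨by omega, by omega⟩
  omega

lemma lam_add_lam_gt_of_le (hw : GrassShape n k s w) (hi : 1 ≤ i) (hij : i < j)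
    (hjs : j ≤ s) : 2 * (k : ℤ) + j - i < lamOf k s w i + lamOf k s w j := by
  simp only [lamOf, if_pos (hij.le.trans hjs), if_pos hjs]
  have hsub : Set.Icc (k + i - 1) (k + j - 1) ⊆ Set.Ico k (k + s) :=
    Set.Icc_subset_Ico (by omega) (by omega)
  have hgap := (hw.strictMonoOn_neg_block.mono hsub).apply_add_sub_le (by omega)
  have := hw.apply_neg (p := k + j - 1) ⟨by omega, by omega⟩
  omega

lemma chi_add_chi_nonneg_iff_of_le_of_lt (hw : GrassShape n k s w) (hi : 1 ≤ i) (his : i ≤ s)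
    (hsj : s < j) (hj : k + j ≤ n) :
    0 ≤ chiOf k s w i + chiOf k s w j ↔ 2 * (k : ℤ) + j - i < lamOf k s w i + lamOf k s w j := by
  simp only [chiOf, lamOf, if_pos his, if_neg hsj.not_ge]
  have hb : k + j - 1 ∈ Set.Ico (k + s) n := ⟨by omega, by omega⟩
  have hcount := hw.apply_add_card_gt hb
  have hcompare := hw.strictMonoOn_neg_block.lt_iff_sub_le_add_card (i := k + i - 1)
    (fun q hq => hw.apply_ne_neg_apply ((mem_Ico.1 hq).2.trans_le hb.1).ne
      ((mem_Ico.1 hq).2.trans_le hw.1) hb.2)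
    (mem_Ico.2 ⟨by omega, by omega⟩)
  constructor
  · intro h
    have := hcompare.1 (by omega)
    omega
  · intro h
    have := hcompare.2 (by omega)
    omega

lemma chi_add_chi_neg_of_lt (hw : GrassShape n k s w) (hsi : s < i) (hij : i < j)
    (hj : k + j ≤ n) : chiOf k s w i + chiOf k s w j < 0 := by
  simp only [chiOf, if_neg hsi.not_ge, if_neg (hsi.trans hij).not_ge]
  have := hw.apply_pos_of_le (p := k + i - 1) ⟨by omega, by omega⟩
  have := hw.apply_pos_of_le (p := k + j - 1) ⟨by omega, by omega⟩
  omega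

end GrassShape

lemma lamOf_le_of_lt {k s j : ℕ} {w : ℕ → ℤ} (hsj : s < j) : lamOf k s w j ≤ k := by
  simp only [lamOf, if_neg hsj.not_ge, Nat.cast_le]
  exact (card_filter_le _ _).trans (card_range k).le

/-- Lemma 3.3: `χ_i + χ_j ≥ 0 ↔ λ_i + λ_j > 2k + j − i` for `1 ≤ i < j ≤ n − k`. -/
theorem chi_add_chi_nonneg_iff (n k s : ℕ) (w : ℕ → ℤ) (hw : GrassShape n k s w)
    (i j : ℕ) (hi : 1 ≤ i) (hij : i < j) (hj : j ≤ n - k) :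
    0 ≤ chiOf k s w i + chiOf k s w j ↔
      2 * (k : ℤ) + j - i < lamOf k s w i + lamOf k s w j := by
  rcases le_or_gt j s with hjs | hsj
  · exact iff_of_true (hw.chi_add_chi_nonneg_of_le hi hij hjs)
      (hw.lam_add_lam_gt_of_le hi hij hjs)
  rcases le_or_gt i s with his | hsi
  · exact hw.chi_add_chi_nonneg_iff_of_le_of_lt hi his hsj (by omega)
  · have hlam := add_le_add (lamOf_le_of_lt (k := k) (w := w) hsi)
      (lamOf_le_of_lt (k := k) (w := w) hsj)
    exact iff_of_false (hw.chi_add_chi_neg_of_lt hsi hij (by omega)).not_ge (by omega)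
end
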